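/- Let A and B be finite posets, and let g : A → B and f : B → A be order-preserving maps forming a Galois connection g ⊣ f. Then the topological spaces X_A and X_B are homotopy equivalent; that is, there exist continuous maps φ : X_A → X_B and ψ : X_B → X_A with ψ ∘ φ homotopic to the identity of X_A and φ ∘ ψ homotopic to the identity of X_B. -/

import Mathlib

open Topology

/-- A map that is `φ` for `t < 1` and `ψ` at `t = 1` is continuous because every open set
containing `ψ x` also contains `φ x`. -/
theorem ContinuousMap.Homotopic.of_specializes {X Y : Type*} [TopologicalSpace X]
    [TopologicalSpace Y] {φ ψ : C(X, Y)} (h : ∀ x, φ x ⤳ ψ x) : φ.Homotopic ψ := by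
  let H : unitInterval × X → Y := fun p => if p.1 = 1 then ψ p.2 else φ p.2
  have hpreimage (U : Set Y) (hU : IsOpen U) :
      H ⁻¹' U = ({1}ᶜ ×ˢ (φ ⁻¹' U)) ∪ (Set.univ ×ˢ (ψ ⁻¹' U)) := by
    ext ⟨t, x⟩
    by_cases ht : t = 1
    · simp [H, ht]
    · simpa [H, ht] using fun hψ => (h x).mem_open hU hψ
  refine ⟨⟨⟨H, continuous_def.2 fun U hU => ?_⟩, fun x => ?_, fun x => ?_⟩⟩
  · rw [hpreimage U hU]
    exact (isOpen_compl_singleton.prod (hU.preimage φ.continuous)).union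
      (isOpen_univ.prod (hU.preimage ψ.continuous))
  · simp [H]
  · simp [H]

theorem ContinuousMap.Homotopic.of_le {X Y : Type*} [TopologicalSpace X] [Preorder Y]
    [TopologicalSpace Y] [Topology.IsLowerSet Y] {φ ψ : C(X, Y)} (h : ∀ x, φ x ≤ ψ x) :
    φ.Homotopic ψ :=
  .of_specializes fun x => Topology.IsLowerSet.specializes_iff_le.2 (h x)

def GaloisConnection.homotopyEquivWithLowerSet {A B : Type*} [Preorder A] [Preorder B]
    {g : A → B} {f : B → A} (gc : GaloisConnection g f) :
    ContinuousMap.HomotopyEquiv (WithLowerSet A) (WithLowerSet B) where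
  toFun := WithLowerSet.map ⟨g, gc.monotone_l⟩
  invFun := WithLowerSet.map ⟨f, gc.monotone_u⟩
  left_inv := (ContinuousMap.Homotopic.of_le gc.le_u_l).symm
  right_inv := .of_le gc.l_u_le

theorem stmt6_general {A B : Type*} [PartialOrder A] [PartialOrder B]
    (g : A → B) (f : B → A)
    (hgal : ∀ (a : A) (b : B), g a ≤ b ↔ a ≤ f b) :
    ∃ (φ : C(WithLowerSet A, WithLowerSet B)) (ψ : C(WithLowerSet B, WithLowerSet A)),
      ContinuousMap.Homotopic (ψ.comp φ) (ContinuousMap.id (WithLowerSet A)) ∧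
      ContinuousMap.Homotopic (φ.comp ψ) (ContinuousMap.id (WithLowerSet B)) :=
  let e := GaloisConnection.homotopyEquivWithLowerSet hgal
  ⟨e.toFun, e.invFun, e.left_inv, e.right_inv⟩

theorem stmt6 {A B : Type*} [PartialOrder A] [Fintype A] [PartialOrder B] [Fintype B]
    (g : A → B) (f : B → A) (hg : Monotone g) (hf : Monotone f)
    (hgal : ∀ (a : A) (b : B), g a ≤ b ↔ a ≤ f b) :
    ∃ (φ : C(WithLowerSet A, WithLowerSet B)) (ψ : C(WithLowerSet B, WithLowerSet A)),
      ContinuousMap.Homotopic (ψ.comp φ) (ContinuousMap.id (WithLowerSet A)) ∧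
      ContinuousMap.Homotopic (φ.comp ψ) (ContinuousMap.id (WithLowerSet B)) :=
  stmt6_general g f hgal
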